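/- arXiv:1206.1906 — 2 statements merged into one kernel-verified Lean document; each statement's English description precedes it below -/
import Mathlib

section
/- Let H be a regular graph of degree k(H) that is not a complete graph. Then |V(H)| ≥ 2k(H) − min{λ(H), μ(H) − 2}, where λ(H) (resp. μ(H)) denotes the maximum number of common neighbors of any two distinct adjacent (resp. nonadjacent) vertices of H. -/
open Finset

variable {α β V : Type*}

/-- The corona product `G ⊙ H`. -/
def SimpleGraph.corona (G : SimpleGraph α) (H : SimpleGraph β) :
    SimpleGraph (α ⊕ α × β) where
  Adj x y :=
    match x, y with
    | Sum.inl u1, Sum.inl u2 => G.Adj u1 u2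
    | Sum.inl u1, Sum.inr p => u1 = p.1
    | Sum.inr p, Sum.inl u2 => p.1 = u2
    | Sum.inr p, Sum.inr q => p.1 = q.1 ∧ H.Adj p.2 q.2
  symm := by
    constructor
    rintro (u1 | p) (u2 | q) h
    · exact h.symm
    · exact h.symm
    · exact h.symm
    · exact ⟨h.1.symm, h.2.symm⟩
  loopless := by
    constructor
    rintro (u | p) h
    · exact G.irrefl h
    · exact H.irrefl h.2

/-- The lexicographic product `G[H]`. -/
def SimpleGraph.lexProd (G : SimpleGraph α) (H : SimpleGraph β) :
    SimpleGraph (α × β) where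
  Adj x y := G.Adj x.1 y.1 ∨ (x.1 = y.1 ∧ H.Adj x.2 y.2)
  symm := by
    constructor
    rintro x y (h | ⟨h1, h2⟩)
    · exact Or.inl h.symm
    · exact Or.inr ⟨h1.symm, h2.symm⟩
  loopless := by
    constructor
    rintro x (h | ⟨h1, h2⟩)
    · exact G.irrefl h
    · exact H.irrefl h2

open scoped Classical in
/-- `R_F{x,y}`: the set of vertices resolving `x` and `y` (distance measured by `edist`,
which is `∞` between vertices in different components). -/
noncomputable def resolvingFinset (F : SimpleGraph V) [Fintype V] (x y : V) : Finset V :=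
  univ.filter fun z => F.edist x z ≠ F.edist y z

/-- `S_H{v₁,v₂} = {v₁,v₂} ∪ (N_H(v₁) Δ N_H(v₂))`. -/
def locatingFinset (H : SimpleGraph V) [Fintype V] [DecidableEq V]
    [DecidableRel H.Adj] (v1 v2 : V) : Finset V :=
  {v1, v2} ∪ symmDiff (H.neighborFinset v1) (H.neighborFinset v2)

/-- A resolving function of `F`. -/
def IsResolvingFn (F : SimpleGraph V) [Fintype V] (g : V → ℝ) : Prop :=
  (∀ v, g v ∈ Set.Icc (0 : ℝ) 1) ∧
    ∀ x y : V, x ≠ y → 1 ≤ ∑ z ∈ resolvingFinset F x y, g z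

/-- The fractional metric dimension `dim_f(F)`. -/
noncomputable def fracMetricDim (F : SimpleGraph V) [Fintype V] : ℝ :=
  sInf {w | ∃ g, IsResolvingFn F g ∧ w = ∑ v, g v}

/-- A locating function of `H`. -/
def IsLocatingFn (H : SimpleGraph V) [Fintype V] [DecidableEq V]
    [DecidableRel H.Adj] (g : V → ℝ) : Prop :=
  (∀ v, g v ∈ Set.Icc (0 : ℝ) 1) ∧
    ∀ v1 v2 : V, v1 ≠ v2 → 1 ≤ ∑ v ∈ locatingFinset H v1 v2, g v

/-- `l_f(H)`: the minimum weight of a locating function. -/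
noncomputable def fracLoc (H : SimpleGraph V) [Fintype V] [DecidableEq V]
    [DecidableRel H.Adj] : ℝ :=
  sInf {w | ∃ g, IsLocatingFn H g ∧ w = ∑ v, g v}

open scoped Classical in
/-- `λ(H)`: maximum number of common neighbours of two adjacent vertices, `-1` if no edges. -/
noncomputable def lambdaMax (H : SimpleGraph V) [Fintype V] : ℤ :=
  if hne : (univ.filter fun p : V × V => H.Adj p.1 p.2).Nonempty then
    (univ.filter fun p : V × V => H.Adj p.1 p.2).sup' hne fun p =>
      ((univ.filter fun w => H.Adj p.1 w ∧ H.Adj p.2 w).card : ℤ)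
  else -1

open scoped Classical in
/-- `μ(H)`: maximum number of common neighbours of two distinct nonadjacent vertices,
`0` for complete graphs. -/
noncomputable def muMax (H : SimpleGraph V) [Fintype V] : ℤ :=
  if hne : (univ.filter fun p : V × V => p.1 ≠ p.2 ∧ ¬H.Adj p.1 p.2).Nonempty then
    (univ.filter fun p : V × V => p.1 ≠ p.2 ∧ ¬H.Adj p.1 p.2).sup' hne fun p =>
      ((univ.filter fun w => H.Adj p.1 w ∧ H.Adj p.2 w).card : ℤ)
  else 0

/-- A graph is vertex-transitive if its automorphism group is transitive on vertices. -/
def IsVertexTransitive (H : SimpleGraph V) : Prop :=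
  ∀ u v : V, ∃ φ : H ≃g H, φ u = v

/-- Two distinct vertices are twins if they have the same closed or the same open
neighbourhood. -/
def SimpleGraph.Twins (G : SimpleGraph V) (u1 u2 : V) : Prop :=
  u1 ≠ u2 ∧ (insert u1 (G.neighborSet u1) = insert u2 (G.neighborSet u2) ∨
    G.neighborSet u1 = G.neighborSet u2)

open scoped Classical in
/-- `m₁(G)`: number of vertices in twin-equivalence classes of type 1 (singletons). -/
noncomputable def m1 (G : SimpleGraph V) [Fintype V] : ℕ :=
  (univ.filter fun u => ∀ w, ¬G.Twins u w).card

open scoped Classical in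
/-- `m₂(G)`: number of vertices in twin-equivalence classes of type 2 (cliques). -/
noncomputable def m2 (G : SimpleGraph V) [Fintype V] : ℕ :=
  (univ.filter fun u => ∃ w, G.Twins u w ∧ G.Adj u w).card

open scoped Classical in
/-- `m₃(G)`: number of vertices in twin-equivalence classes of type 3 (independent sets). -/
noncomputable def m3 (G : SimpleGraph V) [Fintype V] : ℕ :=
  (univ.filter fun u => ∃ w, G.Twins u w ∧ ¬G.Adj u w).card

/-!
Two vertices `u ≠ v` have `|N(u) ∩ N(v)| = 2k - |N(u) ∪ N(v)|`. The union has at most `|V|`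
vertices, and at most `|V| - 2` when `u` and `v` are nonadjacent, since it then misses `u` and
`v`. So any edge gives `λ ≥ 2k - |V|` (if `k = 0` there is none, but then `λ = -1 ≥ -|V|`), and
a nonadjacent pair, which exists because `H` is not complete, gives `μ ≥ 2k - |V| + 2`.
-/

namespace SimpleGraph

variable [Fintype V] [DecidableEq V] (G : SimpleGraph V) [DecidableRel G.Adj]

theorem degree_add_degree_le_card_add_card_inter (u v : V) :
    G.degree u + G.degree v ≤ Fintype.card V + #(G.neighborFinset u ∩ G.neighborFinset v) := by
  have hunion := card_le_univ (G.neighborFinset u ∪ G.neighborFinset v)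
  have := card_union_add_card_inter (G.neighborFinset u) (G.neighborFinset v)
  rw [← card_neighborFinset_eq_degree, ← card_neighborFinset_eq_degree]
  omega

theorem degree_add_degree_add_two_le_card_add_card_inter {u v : V} (hne : u ≠ v)
    (hnadj : ¬G.Adj u v) :
    G.degree u + G.degree v + 2 ≤ Fintype.card V + #(G.neighborFinset u ∩ G.neighborFinset v) := by
  have hnadj' : ¬G.Adj v u := fun h => hnadj h.symm
  have hdisj : Disjoint {u, v} (G.neighborFinset u ∪ G.neighborFinset v) := by
    simp [hnadj, hnadj']
  have hunion := card_le_univ ({u, v} ∪ (G.neighborFinset u ∪ G.neighborFinset v))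
  rw [card_union_of_disjoint hdisj, card_pair hne] at hunion
  have := card_union_add_card_inter (G.neighborFinset u) (G.neighborFinset v)
  rw [← card_neighborFinset_eq_degree, ← card_neighborFinset_eq_degree]
  omega

end SimpleGraph

theorem neg_one_le_lambdaMax [Fintype V] {H : SimpleGraph V} : -1 ≤ lambdaMax H := by
  unfold lambdaMax
  split_ifs with hne
  · obtain ⟨p, hp⟩ := hne
    refine le_trans ?_ (le_sup' _ hp)
    omega
  · exact le_rfl

section CommonNeighborMaxima

variable [Fintype V] [DecidableEq V] {H : SimpleGraph V} [DecidableRel H.Adj]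

theorem card_inter_neighborFinset_le_lambdaMax {u v : V} (hadj : H.Adj u v) :
    (#(H.neighborFinset u ∩ H.neighborFinset v) : ℤ) ≤ lambdaMax H := by
  unfold lambdaMax
  split_ifs with hne
  · refine le_trans ?_ (le_sup' _ (b := (u, v)) (by simpa using hadj))
    exact Nat.cast_le.mpr (card_le_card fun w hw => by simpa using hw)
  · exact absurd ⟨(u, v), by simpa using hadj⟩ hne

theorem card_inter_neighborFinset_le_muMax {u v : V} (hne : u ≠ v) (hnadj : ¬H.Adj u v) :
    (#(H.neighborFinset u ∩ H.neighborFinset v) : ℤ) ≤ muMax H := by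
  unfold muMax
  split_ifs with hpairs
  · refine le_trans ?_ (le_sup' _ (b := (u, v)) (by simpa using ⟨hne, hnadj⟩))
    exact Nat.cast_le.mpr (card_le_card fun w hw => by simpa using hw)
  · exact absurd ⟨(u, v), by simpa using ⟨hne, hnadj⟩⟩ hpairs

theorem SimpleGraph.IsRegularOfDegree.two_mul_sub_card_le_lambdaMax [Nonempty V] {k : ℕ}
    (hreg : H.IsRegularOfDegree k) : 2 * (k : ℤ) - Fintype.card V ≤ lambdaMax H := by
  have hpos : 0 < Fintype.card V := Fintype.card_pos
  obtain rfl | hk := Nat.eq_zero_or_pos k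
  · have := neg_one_le_lambdaMax (H := H)
    omega
  obtain ⟨u⟩ := ‹Nonempty V›
  obtain ⟨v, hv⟩ : (H.neighborFinset u).Nonempty := by
    rw [← card_pos, card_neighborFinset_eq_degree, hreg u]
    exact hk
  have hadj := (H.mem_neighborFinset u v).1 hv
  have := H.degree_add_degree_le_card_add_card_inter u v
  have := card_inter_neighborFinset_le_lambdaMax hadj
  rw [hreg u, hreg v] at *
  omega

theorem SimpleGraph.IsRegularOfDegree.two_mul_sub_card_add_two_le_muMax {k : ℕ}
    (hreg : H.IsRegularOfDegree k) {u v : V} (hne : u ≠ v) (hnadj : ¬H.Adj u v) :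
    2 * (k : ℤ) - Fintype.card V + 2 ≤ muMax H := by
  have := H.degree_add_degree_add_two_le_card_add_card_inter hne hnadj
  have := card_inter_neighborFinset_le_muMax hne hnadj
  rw [hreg u, hreg v] at *
  omega

end CommonNeighborMaxima

theorem stmt_0_general {V : Type*} [Fintype V] [DecidableEq V] (H : SimpleGraph V)
    [DecidableRel H.Adj]
    (k : ℕ) (hreg : H.IsRegularOfDegree k) (hnc : H ≠ ⊤) :
    2 * (k : ℤ) - min (lambdaMax H) (muMax H - 2) ≤ (Fintype.card V : ℤ) := by
  obtain ⟨u, v, hne, hnadj⟩ := H.ne_top_iff_exists_not_adj.mp hnc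
  have : Nonempty V := ⟨u⟩
  have hlam := hreg.two_mul_sub_card_le_lambdaMax
  have hmu := hreg.two_mul_sub_card_add_two_le_muMax hne hnadj
  omega

/-- A regular graph `H` (of degree `k`) with at least two vertices
that is not complete satisfies `|V(H)| ≥ 2k(H) - min{λ(H), μ(H) - 2}`. -/
theorem stmt_0 {V : Type*} [Fintype V] [DecidableEq V] (H : SimpleGraph V)
    [DecidableRel H.Adj] (hcard : 2 ≤ Fintype.card V)
    (k : ℕ) (hreg : H.IsRegularOfDegree k) (hnc : H ≠ ⊤) :
    2 * (k : ℤ) - min (lambdaMax H) (muMax H - 2) ≤ (Fintype.card V : ℤ) :=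
  stmt_0_general H k hreg hnc
end

section
/- Let G be a connected graph and H a graph. Then dim_f(G⊙H) = |V(G)| · l_f(H). -/
open Finset

variable {α β V : Type*}

/-!
Every shortest path leaving a copy of `H` in `G ⊙ H` passes through the root of that copy, so
inside the copy distances are `0`, `1` or `2` according to adjacency in `H`, and all vertices
outside it see two vertices of the copy at the same distance. Hence two vertices of one copy are
resolved exactly by the image of `S_H` in that copy: a resolving function restricts to a locating
function on each of the `|V(G)|` copies, which gives `≥`. Conversely, putting a locating function
on every copy and `0` on `G` resolves `G ⊙ H`, since any pair not contained in one copy is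
resolved by an entire copy, of weight at least `1`.
-/

namespace SimpleGraph

section Edist

variable (G : SimpleGraph V)

lemma edist_le_edist_add_one_of_adj {u v : V} (h : G.Adj u v) (w : V) :
    G.edist u w ≤ G.edist v w + 1 :=
  calc G.edist u w ≤ G.edist u v + G.edist v w := SimpleGraph.edist_triangle
    _ ≤ 1 + G.edist v w := by gcongr; exact edist_le_one_iff_adj_or_eq.mpr (.inl h)
    _ = G.edist v w + 1 := add_comm _ _

lemma le_edist_of_adj_le_add_one (d : V → V → ℕ∞) (hd₀ : ∀ x, d x x = 0)
    (hd : ∀ x y z, G.Adj x y → d x z ≤ d y z + 1) (x y : V) : d x y ≤ G.edist x y := by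
  rw [edist_eq_sInf]
  refine le_sInf ?_
  rintro _ ⟨p, rfl⟩
  induction p with
  | nil => simp [hd₀]
  | cons h q ih =>
    calc _ ≤ _ := hd _ _ _ h
      _ ≤ (q.length : ℕ∞) + 1 := by gcongr
      _ = _ := by simp

variable {G} in
lemma Hom.edist_le {W : Type*} {G' : SimpleGraph W} (f : G →g G') (u v : V) :
    G'.edist (f u) (f v) ≤ G.edist u v := by
  rcases eq_or_ne (G.edist u v) ⊤ with h | h
  · simp [h]
  · obtain ⟨p, hp⟩ := exists_walk_of_edist_ne_top h
    simpa [hp] using SimpleGraph.edist_le (p.map f)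

end Edist

section Corona

variable (G : SimpleGraph α) (H : SimpleGraph β)

@[simp] lemma corona_adj_inl_inl {u v : α} :
    (G.corona H).Adj (.inl u) (.inl v) ↔ G.Adj u v := Iff.rfl

@[simp] lemma corona_adj_inl_inr {u : α} {p : α × β} :
    (G.corona H).Adj (.inl u) (.inr p) ↔ u = p.1 := Iff.rfl

@[simp] lemma corona_adj_inr_inl {p : α × β} {v : α} :
    (G.corona H).Adj (.inr p) (.inl v) ↔ p.1 = v := Iff.rfl

@[simp] lemma corona_adj_inr_inr {p q : α × β} :
    (G.corona H).Adj (.inr p) (.inr q) ↔ p.1 = q.1 ∧ H.Adj p.2 q.2 := Iff.rfl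

lemma edist_corona_inl_inl_le (u v : α) :
    (G.corona H).edist (.inl u) (.inl v) ≤ G.edist u v :=
  Hom.edist_le (⟨Sum.inl, id⟩ : G →g G.corona H) u v

lemma edist_corona_inl_inr_self (u : α) (b : β) :
    (G.corona H).edist (.inl u) (.inr (u, b)) = 1 :=
  edist_eq_one_iff_adj.mpr rfl

section Dist

variable [DecidableEq β] [DecidableRel H.Adj]

/-- The distance between two vertices of the same copy of `H` in `G ⊙ H`. -/
def coneDist (b c : β) : ℕ∞ := if b = c then 0 else if H.Adj b c then 1 else 2

lemma coneDist_le_two (b c : β) : coneDist H b c ≤ 2 := by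
  unfold coneDist; split_ifs <;> decide

lemma coneDist_le_coneDist_add_one {b c : β} (h : H.Adj b c) (d : β) :
    coneDist H b d ≤ coneDist H c d + 1 := by
  unfold coneDist
  split_ifs <;> first | decide | simp_all

variable [DecidableEq α]

/-- The distance function of `G ⊙ H` (see the `edist_corona_*` lemmas below). It changes by at
most `1` along an edge, which is all that is needed to bound `edist` from below. -/
noncomputable def coronaDist : α ⊕ α × β → α ⊕ α × β → ℕ∞
  | .inl u, .inl w => G.edist u w
  | .inl u, .inr q => G.edist u q.1 + 1
  | .inr p, .inl w => G.edist p.1 w + 1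
  | .inr p, .inr q => if p.1 = q.1 then coneDist H p.2 q.2 else G.edist p.1 q.1 + 2

lemma coronaDist_le_coronaDist_add_one {x y : α ⊕ α × β} (h : (G.corona H).Adj x y)
    (z : α ⊕ α × β) : coronaDist G H x z ≤ coronaDist G H y z + 1 := by
  rcases x with u | ⟨u, b⟩ <;> rcases y with v | ⟨v, c⟩ <;> rcases z with w | ⟨w, d⟩ <;>
    simp only [corona_adj_inl_inl, corona_adj_inl_inr, corona_adj_inr_inl,
      corona_adj_inr_inr] at h <;> simp only [coronaDist]
  · exact edist_le_edist_add_one_of_adj G h w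
  · gcongr; exact edist_le_edist_add_one_of_adj G h w
  · subst h; generalize G.edist u w = a; enat_to_nat; omega
  · subst h
    split_ifs with hw
    · subst hw; simp [SimpleGraph.edist_self]
    · generalize G.edist u w = a; enat_to_nat; omega
  · subst h; rfl
  · subst h
    split_ifs with hw
    · subst hw; simpa [SimpleGraph.edist_self, one_add_one_eq_two] using coneDist_le_two H b d
    · generalize G.edist u w = a; enat_to_nat; omega
  · obtain ⟨rfl, -⟩ := h; generalize G.edist u w = a; enat_to_nat; omega
  · obtain ⟨rfl, hbc⟩ := h
    split_ifs
    · exact coneDist_le_coneDist_add_one H hbc d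
    · generalize G.edist u w = a; enat_to_nat; omega

lemma coronaDist_le_edist (x y : α ⊕ α × β) :
    coronaDist G H x y ≤ (G.corona H).edist x y := by
  refine le_edist_of_adj_le_add_one _ _ ?_
    (fun x y z h => coronaDist_le_coronaDist_add_one G H h z) x y
  rintro (u | ⟨u, b⟩) <;> simp [coronaDist, coneDist]

end Dist

lemma edist_corona_inl_inr (u w : α) (c : β) :
    (G.corona H).edist (.inl u) (.inr (w, c)) = G.edist u w + 1 := by
  classical
  refine le_antisymm ?_ (coronaDist_le_edist G H _ _)
  calc _ ≤ (G.corona H).edist (.inl u) (.inl w) +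
        (G.corona H).edist (.inl w) (.inr (w, c)) := SimpleGraph.edist_triangle
    _ ≤ G.edist u w + 1 := by
        rw [edist_corona_inl_inr_self]; gcongr; exact edist_corona_inl_inl_le G H u w

lemma edist_corona_inr_inl (u w : α) (b : β) :
    (G.corona H).edist (.inr (u, b)) (.inl w) = G.edist u w + 1 := by
  rw [edist_comm, edist_corona_inl_inr, edist_comm]

lemma edist_corona_inr_inr_of_ne {u w : α} (h : u ≠ w) (b c : β) :
    (G.corona H).edist (.inr (u, b)) (.inr (w, c)) = G.edist u w + 2 := by
  classical
  refine le_antisymm ?_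
    (by simpa [coronaDist, h] using coronaDist_le_edist G H (.inr (u, b)) (.inr (w, c)))
  calc _ ≤ (G.corona H).edist (.inr (u, b)) (.inl u) +
        (G.corona H).edist (.inl u) (.inr (w, c)) := SimpleGraph.edist_triangle
    _ = G.edist u w + 2 := by
        rw [edist_comm, edist_corona_inl_inr_self, edist_corona_inl_inr, add_comm, add_assoc,
          one_add_one_eq_two]

lemma edist_corona_inr_inr_self [DecidableEq β] [DecidableRel H.Adj] (u : α) (b c : β) :
    (G.corona H).edist (.inr (u, b)) (.inr (u, c)) = coneDist H b c := by
  classical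
  refine le_antisymm ?_
    (by simpa [coronaDist] using coronaDist_le_edist G H (.inr (u, b)) (.inr (u, c)))
  unfold coneDist
  split_ifs with hbc hadj
  · simp [hbc]
  · exact (edist_eq_one_iff_adj.mpr
      (show (G.corona H).Adj (.inr (u, b)) (.inr (u, c)) from ⟨rfl, hadj⟩)).le
  · calc _ ≤ (G.corona H).edist (.inr (u, b)) (.inl u) +
          (G.corona H).edist (.inl u) (.inr (u, c)) := SimpleGraph.edist_triangle
      _ = 2 := by rw [edist_comm, edist_corona_inl_inr_self, edist_corona_inl_inr_self]; rfl

def coronaCopy (u : α) : β ↪ α ⊕ α × β := (Function.Embedding.sectR u β).trans .inr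

@[simp] lemma coronaCopy_apply (u : α) (b : β) : coronaCopy u b = .inr (u, b) := rfl

end Corona

end SimpleGraph

section Resolving

variable [Fintype V] (F : SimpleGraph V)

lemma mem_resolvingFinset {x y z : V} :
    z ∈ resolvingFinset F x y ↔ F.edist x z ≠ F.edist y z := by
  simp [resolvingFinset]

lemma resolvingFinset_comm (x y : V) : resolvingFinset F x y = resolvingFinset F y x := by
  ext; simp only [mem_resolvingFinset, ne_comm]

lemma isResolvingFn_one : IsResolvingFn F 1 := by
  refine ⟨fun _ => ⟨zero_le_one, le_rfl⟩, fun x y hxy => ?_⟩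
  have hx : x ∈ resolvingFinset F x y := by
    rw [mem_resolvingFinset, SimpleGraph.edist_self, ne_comm, ne_eq,
      SimpleGraph.edist_eq_zero_iff]
    exact hxy.symm
  simpa using card_pos.mpr ⟨x, hx⟩

lemma fracMetricDim_le {g : V → ℝ} (hg : IsResolvingFn F g) : fracMetricDim F ≤ ∑ v, g v :=
  csInf_le ⟨0, by rintro _ ⟨g, hg, rfl⟩; exact sum_nonneg fun v _ => (hg.1 v).1⟩
    ⟨g, hg, rfl⟩

lemma le_fracMetricDim {c : ℝ} (h : ∀ g, IsResolvingFn F g → c ≤ ∑ v, g v) :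
    c ≤ fracMetricDim F :=
  le_csInf ⟨_, 1, isResolvingFn_one F, rfl⟩ (by rintro _ ⟨g, hg, rfl⟩; exact h g hg)

end Resolving

section Locating

variable [Fintype V] [DecidableEq V] (H : SimpleGraph V) [DecidableRel H.Adj]

lemma isLocatingFn_one : IsLocatingFn H 1 := by
  refine ⟨fun _ => ⟨zero_le_one, le_rfl⟩, fun v1 v2 _ => ?_⟩
  have hv1 : v1 ∈ locatingFinset H v1 v2 := by simp [locatingFinset]
  simpa using card_pos.mpr ⟨v1, hv1⟩

lemma fracLoc_le {g : V → ℝ} (hg : IsLocatingFn H g) : fracLoc H ≤ ∑ v, g v :=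
  csInf_le ⟨0, by rintro _ ⟨g, hg, rfl⟩; exact sum_nonneg fun v _ => (hg.1 v).1⟩
    ⟨g, hg, rfl⟩

lemma le_fracLoc {c : ℝ} (h : ∀ g, IsLocatingFn H g → c ≤ ∑ v, g v) : c ≤ fracLoc H :=
  le_csInf ⟨_, 1, isLocatingFn_one H, rfl⟩ (by rintro _ ⟨g, hg, rfl⟩; exact h g hg)

variable {H} in
lemma IsLocatingFn.one_le_sum [Nontrivial V] {g : V → ℝ} (hg : IsLocatingFn H g) :
    1 ≤ ∑ v, g v := by
  obtain ⟨v1, v2, hv⟩ := exists_pair_ne V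
  exact (hg.2 v1 v2 hv).trans
    (sum_le_sum_of_subset_of_nonneg (subset_univ _) fun v _ _ => (hg.1 v).1)

end Locating

section CoronaResolving

open SimpleGraph

variable [Fintype α] [Fintype β] (G : SimpleGraph α) (H : SimpleGraph β)

lemma coneDist_ne_coneDist_iff [DecidableEq β] [DecidableRel H.Adj] {b₁ b₂ : β}
    (h : b₁ ≠ b₂) (d : β) :
    coneDist H b₁ d ≠ coneDist H b₂ d ↔ d ∈ locatingFinset H b₁ b₂ := by
  simp only [coneDist, locatingFinset, mem_union, mem_insert, mem_singleton, mem_symmDiff,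
    mem_neighborFinset]
  split_ifs <;> simp_all [eq_comm (a := d)]

lemma resolvingFinset_corona_inr_inr [DecidableEq β] [DecidableRel H.Adj] (u : α) {b₁ b₂ : β}
    (h : b₁ ≠ b₂) :
    resolvingFinset (G.corona H) (.inr (u, b₁)) (.inr (u, b₂)) =
      (locatingFinset H b₁ b₂).map (coronaCopy u) := by
  ext (w | ⟨w, d⟩)
  · simp [mem_resolvingFinset, edist_corona_inr_inl]
  · rcases eq_or_ne u w with rfl | huw
    · simp [mem_resolvingFinset, edist_corona_inr_inr_self, coneDist_ne_coneDist_iff H h]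
    · simp [mem_resolvingFinset, edist_corona_inr_inr_of_ne G H huw, huw]

variable {G H} in
lemma IsResolvingFn.isLocatingFn_corona_copy [DecidableEq β] [DecidableRel H.Adj]
    {g : α ⊕ α × β → ℝ} (hg : IsResolvingFn (G.corona H) g) (u : α) :
    IsLocatingFn H fun b => g (.inr (u, b)) := by
  refine ⟨fun b => hg.1 _, fun b₁ b₂ hb => ?_⟩
  have := hg.2 (.inr (u, b₁)) (.inr (u, b₂)) (by simpa using hb)
  rwa [resolvingFinset_corona_inr_inr G H u hb, sum_map] at this

lemma inr_mem_resolvingFinset_inl_inl {u v : α} (h : u ≠ v) (d : β) :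
    .inr (u, d) ∈ resolvingFinset (G.corona H) (.inl u) (.inl v) := by
  have := G.edist_pos_of_ne h.symm
  rw [mem_resolvingFinset, edist_corona_inl_inr, edist_corona_inl_inr, SimpleGraph.edist_self]
  generalize G.edist v u = a at this ⊢
  enat_to_nat; omega

lemma inr_mem_resolvingFinset_inl_inr_of_ne {u v : α} (h : u ≠ v) (c d : β) :
    .inr (u, d) ∈ resolvingFinset (G.corona H) (.inl u) (.inr (v, c)) := by
  rw [mem_resolvingFinset, edist_corona_inl_inr, edist_corona_inr_inr_of_ne G H h.symm,
    SimpleGraph.edist_self]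
  generalize G.edist v u = a
  enat_to_nat; omega

lemma inr_mem_resolvingFinset_inl_inr_self {u w : α} (hr : G.Reachable u w) (h : u ≠ w)
    (c d : β) : .inr (w, d) ∈ resolvingFinset (G.corona H) (.inl u) (.inr (u, c)) := by
  have := SimpleGraph.edist_ne_top_iff_reachable.mpr hr
  rw [mem_resolvingFinset, edist_corona_inl_inr, edist_corona_inr_inr_of_ne G H h]
  generalize G.edist u w = a at this ⊢
  enat_to_nat <;> omega

lemma inr_mem_resolvingFinset_inr_inr_of_ne {u v : α} (h : u ≠ v) (b c d : β) :
    .inr (u, d) ∈ resolvingFinset (G.corona H) (.inr (u, b)) (.inr (v, c)) := by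
  classical
  have hvu := G.edist_pos_of_ne h.symm
  have hb := coneDist_le_two H b d
  rw [mem_resolvingFinset, edist_corona_inr_inr_self, edist_corona_inr_inr_of_ne G H h.symm]
  generalize G.edist v u = a at hvu ⊢
  generalize coneDist H b d = e at hb ⊢
  enat_to_nat; omega

variable {G H} in
lemma IsLocatingFn.isResolvingFn_corona [DecidableEq β] [DecidableRel H.Adj] [Nontrivial α]
    [Nontrivial β] (hG : G.Connected) {h : β → ℝ} (hh : IsLocatingFn H h) :
    IsResolvingFn (G.corona H) (Sum.elim 0 fun p => h p.2) := by
  set g : α ⊕ α × β → ℝ := Sum.elim 0 fun p => h p.2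
  have hg : ∀ z, g z ∈ Set.Icc (0 : ℝ) 1 := by
    rintro (u | ⟨u, b⟩)
    exacts [⟨le_rfl, zero_le_one⟩, hh.1 b]
  have of_copy (x y : α ⊕ α × β) (w : α)
      (hw : ∀ d, .inr (w, d) ∈ resolvingFinset (G.corona H) x y) :
      1 ≤ ∑ z ∈ resolvingFinset (G.corona H) x y, g z :=
    calc 1 ≤ ∑ d, h d := hh.one_le_sum
      _ = ∑ z ∈ univ.map (coronaCopy w), g z := by simp [g]
      _ ≤ _ := sum_le_sum_of_subset_of_nonneg
          (by rintro _ hz; obtain ⟨d, -, rfl⟩ := mem_map.mp hz; exact hw d)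
          fun z _ _ => (hg z).1
  have inl_inr (u v : α) (c : β) :
      1 ≤ ∑ z ∈ resolvingFinset (G.corona H) (.inl u) (.inr (v, c)), g z := by
    rcases eq_or_ne u v with rfl | huv
    · obtain ⟨w, hw⟩ := exists_ne u
      exact of_copy _ _ w
        (inr_mem_resolvingFinset_inl_inr_self G H (hG.preconnected u w) hw.symm c)
    · exact of_copy _ _ u (inr_mem_resolvingFinset_inl_inr_of_ne G H huv c)
  refine ⟨hg, ?_⟩
  rintro (u | ⟨u, b⟩) (v | ⟨v, c⟩) hxy
  · exact of_copy _ _ u (inr_mem_resolvingFinset_inl_inl G H (by rintro rfl; exact hxy rfl))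
  · exact inl_inr u v c
  · rw [resolvingFinset_comm]; exact inl_inr v u b
  · rcases eq_or_ne u v with rfl | huv
    · have hbc : b ≠ c := by rintro rfl; exact hxy rfl
      rw [resolvingFinset_corona_inr_inr G H u hbc, sum_map]
      exact hh.2 b c hbc
    · exact of_copy _ _ u (inr_mem_resolvingFinset_inr_inr_of_ne G H huv b c)

end CoronaResolving

/-- For a connected graph `G` and a graph `H`,
`dim_f(G ⊙ H) = |V(G)| · l_f(H)`. -/
theorem stmt_6 {α β : Type*} [Fintype α] [Fintype β] [DecidableEq β]
    (G : SimpleGraph α) (H : SimpleGraph β) [DecidableRel H.Adj]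
    (hG : G.Connected) (hca : 2 ≤ Fintype.card α) (hcb : 2 ≤ Fintype.card β) :
    fracMetricDim (G.corona H) = (Fintype.card α : ℝ) * fracLoc H := by
  have : Nontrivial α := Fintype.one_lt_card_iff_nontrivial.mp hca
  have : Nontrivial β := Fintype.one_lt_card_iff_nontrivial.mp hcb
  have hn : (0 : ℝ) < Fintype.card α := by exact_mod_cast Fintype.card_pos
  refine le_antisymm ?_ ?_
  · rw [← div_le_iff₀' hn]
    refine le_fracLoc H fun h hh => ?_
    rw [div_le_iff₀' hn]
    calc fracMetricDim (G.corona H) ≤ ∑ v, Sum.elim 0 (fun p => h p.2) v :=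
          fracMetricDim_le _ (hh.isResolvingFn_corona hG)
      _ = _ := by simp [Fintype.sum_sum_type, Fintype.sum_prod_type]
  · refine le_fracMetricDim _ fun g hg => ?_
    calc (Fintype.card α : ℝ) * fracLoc H = ∑ _u : α, fracLoc H := by simp
      _ ≤ ∑ u, ∑ b, g (.inr (u, b)) :=
          sum_le_sum fun u _ => fracLoc_le H (hg.isLocatingFn_corona_copy u)
      _ ≤ ∑ v, g v := by
        rw [Fintype.sum_sum_type, Fintype.sum_prod_type]
        exact le_add_of_nonneg_left (sum_nonneg fun u _ => (hg.1 _).1)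
end
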